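/- arXiv:2507.03723 — 2 statements merged into one kernel-verified Lean document; each statement's English description precedes it below -/
import Mathlib

section
/- Let α, β be real numbers with α ≥ β ≥ -1/2, and for each natural number ℓ define N_ℓ = (2ℓ + α + β + 1) Γ(β+1) Γ(ℓ+α+β+1) Γ(ℓ+α+1) / (Γ(α+1) Γ(α+β+2) Γ(ℓ+1) Γ(ℓ+β+1)) and λ_ℓ = -ℓ(ℓ+α+β+1). Then for a real number p ≥ 0, the series ∑_{ℓ=0}^∞ N_ℓ · (1 - λ_ℓ)^{-p} = ∑_{ℓ=0}^∞ N_ℓ / (1 + ℓ(ℓ+α+β+1))^p converges if and only if p > α + 1. Equivalently, with d = 2α + 2, the Sobolev space ℋ_p(𝕄^d) is a reproducing kernel Hilbert space if and only if p > d/2. -/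
/-!
The asymptotics `Γ(n + s) ~ Γ(n) n^s`, a consequence of Euler's limit formula for `Γ`, give
`N ℓ ~ C ℓ^(2α+1)` with `C = 2 Γ(β+1) / (Γ(α+1) Γ(α+β+2)) > 0`, while
`(1 + ℓ(ℓ+α+β+1))^p ~ ℓ^(2p)`. The series is therefore comparable to `∑ ℓ^(2α+1-2p)`, which
converges exactly when `2α + 1 - 2p < -1`.
-/

open Filter Topology Asymptotics

namespace Real

noncomputable def gammaRatio (s : ℝ) (n : ℕ) : ℝ :=
  Gamma (n + s) / (Gamma n * (n : ℝ) ^ s)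

lemma Gamma_add_nat_eq_prod_mul {s : ℝ} (hs : ∀ m : ℕ, s ≠ -m) (n : ℕ) :
    Gamma (s + n) = (∏ j ∈ Finset.range n, (s + j)) * Gamma s := by
  induction n with
  | zero => simp
  | succ n ih =>
    have hsn : s + n ≠ 0 := fun h => hs n (eq_neg_of_add_eq_zero_left h)
    rw [Nat.cast_succ, ← add_assoc, Gamma_add_one hsn, ih, Finset.prod_range_succ]
    ring

lemma gammaRatio_eq_gammaRatio_add_one_mul {s : ℝ} {n : ℕ} (hn : 0 < n)
    (hns : (n : ℝ) + s ≠ 0) :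
    gammaRatio s n = gammaRatio (s + 1) n * (n / (n + s)) := by
  have hn' : (0 : ℝ) < n := by exact_mod_cast hn
  have := (Gamma_pos_of_pos hn').ne'
  have := (rpow_pos_of_pos hn' s).ne'
  rw [gammaRatio, gammaRatio, ← add_assoc, Gamma_add_one hns, rpow_add_one hn'.ne']
  field_simp

lemma gammaRatio_add_one_eq_Gamma_div_GammaSeq {s : ℝ} (hs : ∀ m : ℕ, s ≠ -m) {n : ℕ}
    (hn : 0 < n) :
    gammaRatio (s + 1) n = Gamma s / GammaSeq s n := by
  have hn' : (0 : ℝ) < n := by exact_mod_cast hn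
  have hprod : ∏ j ∈ Finset.range (n + 1), (s + j) ≠ 0 :=
    Finset.prod_ne_zero_iff.mpr fun j _ h => hs j (eq_neg_of_add_eq_zero_left h)
  have hfact : (n.factorial : ℝ) = n * Gamma n := by
    rw [← Gamma_nat_eq_factorial, Gamma_add_one hn'.ne']
  have := (Gamma_pos_of_pos hn').ne'
  have := (rpow_pos_of_pos hn' s).ne'
  have := Gamma_ne_zero hs
  rw [gammaRatio, show (n : ℝ) + (s + 1) = s + (n + 1 : ℕ) by push_cast; ring,
    Gamma_add_nat_eq_prod_mul hs, GammaSeq, hfact, rpow_add_one hn'.ne']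
  field_simp

lemma tendsto_gammaRatio_of_add_one {s : ℝ}
    (h : Tendsto (gammaRatio (s + 1)) atTop (𝓝 1)) : Tendsto (gammaRatio s) atTop (𝓝 1) := by
  refine (mul_one (1 : ℝ) ▸ h.mul (tendsto_natCast_div_add_atTop s)).congr' ?_
  have hs : ∀ᶠ n : ℕ in atTop, (n : ℝ) + s ≠ 0 :=
    (tendsto_atTop_add_const_right _ s tendsto_natCast_atTop_atTop).eventually_ne_atTop 0
  filter_upwards [eventually_gt_atTop 0, hs] with n hn hns
  exact (gammaRatio_eq_gammaRatio_add_one_mul hn hns).symm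

-- For `s > 0` Euler's limit formula applies; smaller `s` are reached by `Γ(x + 1) = x Γ(x)`.
lemma tendsto_gammaRatio (s : ℝ) : Tendsto (gammaRatio s) atTop (𝓝 1) := by
  obtain ⟨k, hk⟩ := exists_nat_gt (-s)
  induction k generalizing s with
  | zero =>
    apply tendsto_gammaRatio_of_add_one
    have hs : ∀ m : ℕ, s ≠ -m := fun m h => by
      have : (0 : ℝ) ≤ m := m.cast_nonneg
      simp only [CharP.cast_eq_zero] at hk
      linarith
    have hlim := (tendsto_const_nhds (x := Gamma s)).div (GammaSeq_tendsto_Gamma s)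
      (Gamma_ne_zero hs)
    rw [div_self (Gamma_ne_zero hs)] at hlim
    refine hlim.congr' ?_
    filter_upwards [eventually_gt_atTop 0] with n hn
    exact (gammaRatio_add_one_eq_Gamma_div_GammaSeq hs hn).symm
  | succ k ih =>
    exact tendsto_gammaRatio_of_add_one (ih (s + 1) (by push_cast at hk; linarith))

theorem isEquivalent_Gamma_nat_add (s : ℝ) :
    (fun n : ℕ => Gamma (n + s)) ~[atTop] fun n => Gamma n * (n : ℝ) ^ s :=
  isEquivalent_of_tendsto_one (tendsto_gammaRatio s)

end Real

noncomputable def eigenspaceDim (α β : ℝ) (ℓ : ℕ) : ℝ :=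
  (2 * ℓ + α + β + 1) * Real.Gamma (β + 1) * Real.Gamma (ℓ + α + β + 1) *
      Real.Gamma (ℓ + α + 1) /
    (Real.Gamma (α + 1) * Real.Gamma (α + β + 2) * Real.Gamma (ℓ + 1) *
      Real.Gamma (ℓ + β + 1))

theorem isEquivalent_eigenspaceDim (α β : ℝ) :
    eigenspaceDim α β ~[atTop] fun ℓ =>
      2 * Real.Gamma (β + 1) / (Real.Gamma (α + 1) * Real.Gamma (α + β + 2)) *
        (ℓ : ℝ) ^ (2 * α + 1) := by
  have hlin : (fun ℓ : ℕ => 2 * (ℓ : ℝ) + α + β + 1) ~[atTop] fun ℓ => 2 * (ℓ : ℝ) := by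
    refine (IsEquivalent.refl.add_const_of_norm_tendsto_atTop (c := α + β + 1) ?_).congr_left
      (.of_eq (funext fun ℓ => by ring))
    exact tendsto_norm_atTop_atTop.comp
      (tendsto_natCast_atTop_atTop.const_mul_atTop two_pos)
  have hΓ (s : ℝ) := Real.isEquivalent_Gamma_nat_add s
  have hquot := (((hlin.mul (IsEquivalent.refl (u := fun _ => Real.Gamma (β + 1)))).mul
    (hΓ (α + β + 1))).mul (hΓ (α + 1))).div
    (((IsEquivalent.refl (u := fun _ => Real.Gamma (α + 1) * Real.Gamma (α + β + 2))).mul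
    (hΓ 1)).mul (hΓ (β + 1)))
  refine (hquot.congr_left (.of_eq (funext fun ℓ => ?_))).congr_right ?_
  · simp only [eigenspaceDim, Pi.mul_apply, Pi.div_apply, add_assoc]
  filter_upwards [eventually_gt_atTop 0] with ℓ hℓ
  have hℓ' : (0 : ℝ) < ℓ := by exact_mod_cast hℓ
  have := (Real.Gamma_pos_of_pos hℓ').ne'
  have := (Real.rpow_pos_of_pos hℓ' (β + 1)).ne'
  have hpow : (ℓ : ℝ) ^ (α + β + 1) * (ℓ : ℝ) ^ (α + 1) =
      (ℓ : ℝ) ^ (2 * α + 1) * (ℓ : ℝ) ^ (β + 1) := by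
    rw [← Real.rpow_add hℓ', ← Real.rpow_add hℓ']
    ring_nf
  simp only [Pi.mul_apply, Pi.div_apply, Real.rpow_one]
  field_simp
  rw [mul_assoc (Real.Gamma (β + 1)), hpow]
  ring

theorem isEquivalent_one_add_mul_add_rpow (q p : ℝ) :
    (fun ℓ : ℕ => (1 + ℓ * (ℓ + q)) ^ p) ~[atTop] fun ℓ => (ℓ : ℝ) ^ (2 * p) := by
  have hnorm : Tendsto (norm ∘ fun ℓ : ℕ => (ℓ : ℝ)) atTop atTop :=
    tendsto_norm_atTop_atTop.comp tendsto_natCast_atTop_atTop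
  have hsq : (fun ℓ : ℕ => 1 + ℓ * (ℓ + q)) ~[atTop] fun ℓ => (ℓ : ℝ) ^ 2 := by
    have hmul := (IsEquivalent.refl (u := fun ℓ : ℕ => (ℓ : ℝ))).mul
      (IsEquivalent.refl.add_const_of_norm_tendsto_atTop hnorm (c := q))
    refine (hmul.const_add_of_norm_tendsto_atTop (c := 1) ?_).congr_right
      (.of_eq (funext fun ℓ => (sq _).symm))
    exact tendsto_norm_atTop_atTop.comp
      (tendsto_natCast_atTop_atTop.atTop_mul_atTop₀ tendsto_natCast_atTop_atTop)
  refine (hsq.rpow (fun ℓ => by positivity) (r := p)).congr_right (.of_eq (funext fun ℓ => ?_))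
  simp only [Pi.pow_apply]
  rw [← Real.rpow_natCast, ← Real.rpow_mul ℓ.cast_nonneg]
  norm_num

lemma summable_iff_of_isEquivalent_const_mul_rpow {f : ℕ → ℝ} {c r : ℝ} (hc : c ≠ 0)
    (h : f ~[atTop] fun n => c * (n : ℝ) ^ r) : Summable f ↔ r < -1 := by
  rw [h.summable_iff_nat, summable_mul_left_iff hc, Real.summable_nat_rpow]

theorem sobolev_RKHS_criterion_general
    (α β : ℝ) (hβ : -1/2 ≤ β) (hαβ : β ≤ α)
    (N : ℕ → ℝ)
    (hN : ∀ ℓ : ℕ, N ℓ =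
      (2 * ℓ + α + β + 1) * Real.Gamma (β + 1) * Real.Gamma (ℓ + α + β + 1) *
        Real.Gamma (ℓ + α + 1) /
      (Real.Gamma (α + 1) * Real.Gamma (α + β + 2) * Real.Gamma (ℓ + 1) *
        Real.Gamma (ℓ + β + 1)))
    (p : ℝ) :
    Summable (fun ℓ : ℕ => N ℓ / (1 + ℓ * (ℓ + α + β + 1)) ^ p) ↔ α + 1 < p := by
  have hc : 2 * Real.Gamma (β + 1) / (Real.Gamma (α + 1) * Real.Gamma (α + β + 2)) ≠ 0 := by
    have := Real.Gamma_pos_of_pos (show 0 < β + 1 by linarith)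
    have := Real.Gamma_pos_of_pos (show 0 < α + 1 by linarith)
    have := Real.Gamma_pos_of_pos (show 0 < α + β + 2 by linarith)
    positivity
  have hterm := (isEquivalent_eigenspaceDim α β).div
    (isEquivalent_one_add_mul_add_rpow (α + β + 1) p)
  rw [summable_iff_of_isEquivalent_const_mul_rpow hc (r := 2 * α + 1 - 2 * p) ?_]
  · constructor <;> intro h <;> linarith
  refine (hterm.congr_left (.of_eq (funext fun ℓ => ?_))).congr_right ?_
  · simp only [Pi.div_apply, hN, eigenspaceDim, add_assoc]
  filter_upwards [eventually_gt_atTop 0] with ℓ hℓ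
  rw [Pi.div_apply, Real.rpow_sub (by exact_mod_cast hℓ), mul_div_assoc]

/-- For `α ≥ β ≥ -1/2` and `p ≥ 0`, the series
`∑_ℓ N ℓ / (1 + ℓ(ℓ+α+β+1))^p` converges if and only if `p > α + 1`
(the RKHS criterion for the Sobolev space `ℋ_p(𝕄^d)` with `d = 2α+2`). -/
theorem sobolev_RKHS_criterion
    (α β : ℝ) (hβ : -1/2 ≤ β) (hαβ : β ≤ α)
    (N : ℕ → ℝ)
    (hN : ∀ ℓ : ℕ, N ℓ =
      (2 * ℓ + α + β + 1) * Real.Gamma (β + 1) * Real.Gamma (ℓ + α + β + 1) *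
        Real.Gamma (ℓ + α + 1) /
      (Real.Gamma (α + 1) * Real.Gamma (α + β + 2) * Real.Gamma (ℓ + 1) *
        Real.Gamma (ℓ + β + 1)))
    (p : ℝ) (hp : 0 ≤ p) :
    Summable (fun ℓ : ℕ => N ℓ / (1 + ℓ * (ℓ + α + β + 1)) ^ p) ↔ α + 1 < p :=
  sobolev_RKHS_criterion_general α β hβ hαβ N hN p
end

section
/- Let α, β be real numbers with α ≥ β ≥ -1/2, and for each natural number ℓ define N_ℓ = (2ℓ + α + β + 1) Γ(β+1) Γ(ℓ+α+β+1) Γ(ℓ+α+1) / (Γ(α+1) Γ(α+β+2) Γ(ℓ+1) Γ(ℓ+β+1)) and λ_ℓ = -ℓ(ℓ+α+β+1). Then for a real number p ≥ 0, the series over even indices ∑_{ℓ even, ℓ ≥ 0} N_ℓ / (1 + ℓ(ℓ+α+β+1))^p converges if and only if p > α + 1. (This is the reproducing-kernel criterion for the real projective space ℙ^d(ℝ), whose Laplace–Beltrami spectrum is indexed by Λ = {even natural numbers}.) -/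
set_option maxHeartbeats 1000000

open Real

lemma wendel_aux (x s : ℝ) (hx : 1 ≤ x) (hs : 0 ≤ s) (hs1 : s ≤ 1) :
    x ^ s * Real.Gamma x / 2 ≤ Real.Gamma (x + s) ∧
    Real.Gamma (x + s) ≤ x ^ s * Real.Gamma x := by
  have hx0 : 0 < x := lt_of_lt_of_le one_pos hx
  have hxs : 0 < x + s := by linarith
  have hGx : 0 < Real.Gamma x := Real.Gamma_pos_of_pos hx0
  have hGxs : 0 < Real.Gamma (x + s) := Real.Gamma_pos_of_pos hxs
  have h1 : Real.log (Real.Gamma (x + s)) ≤ Real.log (Real.Gamma x) + s * Real.log x := by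
    have h := Real.convexOn_log_Gamma.2 (Set.mem_Ioi.2 hx0)
      (Set.mem_Ioi.2 (by linarith : (0:ℝ) < x + 1))
      (by linarith : (0:ℝ) ≤ 1 - s) hs (by ring)
    simp only [smul_eq_mul, Function.comp] at h
    have harg : (1 - s) * x + s * (x + 1) = x + s := by ring
    rw [harg, Real.Gamma_add_one (ne_of_gt hx0),
        Real.log_mul (ne_of_gt hx0) (ne_of_gt hGx)] at h
    nlinarith [h]
  have h2 : Real.log x + Real.log (Real.Gamma x) ≤
      Real.log (Real.Gamma (x + s)) + (1 - s) * Real.log (x + s) := by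
    have h := Real.convexOn_log_Gamma.2 (Set.mem_Ioi.2 hxs)
      (Set.mem_Ioi.2 (by linarith : (0:ℝ) < x + s + 1)) hs
      (by linarith : (0:ℝ) ≤ 1 - s) (by ring)
    simp only [smul_eq_mul, Function.comp] at h
    have harg : s * (x + s) + (1 - s) * (x + s + 1) = x + 1 := by ring
    rw [harg, Real.Gamma_add_one (ne_of_gt hx0), Real.Gamma_add_one (ne_of_gt hxs),
        Real.log_mul (ne_of_gt hx0) (ne_of_gt hGx),
        Real.log_mul (ne_of_gt hxs) (ne_of_gt hGxs)] at h
    nlinarith [h]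
  have hxspos : 0 < x ^ s * Real.Gamma x := mul_pos (Real.rpow_pos_of_pos hx0 s) hGx
  have hlogmul : Real.log (x ^ s * Real.Gamma x) = s * Real.log x + Real.log (Real.Gamma x) := by
    rw [Real.log_mul (ne_of_gt (Real.rpow_pos_of_pos hx0 s)) (ne_of_gt hGx),
        Real.log_rpow hx0]
  constructor
  · rw [← Real.log_le_log_iff (by positivity) hGxs, Real.log_div (ne_of_gt hxspos) two_ne_zero,
        hlogmul]
    have hlx : 0 ≤ Real.log x := Real.log_nonneg hx
    have hl2 : 0 ≤ Real.log 2 := Real.log_nonneg one_le_two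
    have hmono : Real.log (x + s) ≤ Real.log 2 + Real.log x := by
      rw [← Real.log_mul two_ne_zero (ne_of_gt hx0)]
      exact Real.log_le_log hxs (by linarith)
    nlinarith [mul_le_mul_of_nonneg_left hmono (by linarith : (0:ℝ) ≤ 1 - s),
      mul_nonneg (by linarith : (0:ℝ) ≤ 1 - s) hl2, mul_nonneg hs hlx]
  · rw [← Real.log_le_log_iff hGxs hxspos, hlogmul]
    linarith

lemma gamma_ratio_nonneg : ∀ n : ℕ, ∀ a : ℝ, 0 ≤ a → a ≤ n + 1 →
    ∃ c C : ℝ, 0 < c ∧ 0 < C ∧ ∀ x : ℝ, 2 ≤ x →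
      c * (x ^ a * Real.Gamma x) ≤ Real.Gamma (x + a) ∧
      Real.Gamma (x + a) ≤ C * (x ^ a * Real.Gamma x) := by
  intro n
  induction n with
  | zero =>
    intro a ha ha1
    refine ⟨1/2, 1, by norm_num, one_pos, fun x hx => ?_⟩
    have h := wendel_aux x a (by linarith) ha (by simpa using ha1)
    constructor
    · calc (1/2 : ℝ) * (x ^ a * Real.Gamma x) = x ^ a * Real.Gamma x / 2 := by ring
        _ ≤ Real.Gamma (x + a) := h.1
    · simpa using h.2
  | succ n ih =>
    intro a ha ha1
    rcases le_or_gt a (n + 1) with hle | hgt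
    · exact ih a ha hle
    · have ha1' : (0:ℝ) ≤ a - 1 := by
        have : (1:ℝ) ≤ n + 1 := by exact_mod_cast Nat.one_le_iff_ne_zero.2 (by positivity)
        linarith
      have ha2' : a - 1 ≤ n + 1 := by push_cast at ha1 ⊢; linarith
      obtain ⟨c, C, hc, hC, hb⟩ := ih (a - 1) ha1' ha2'
      refine ⟨c, C * (1 + a), hc, by positivity, fun x hx => ?_⟩
      have hx0 : (0:ℝ) < x := by linarith
      obtain ⟨hlow, hup⟩ := hb x hx
      have hne : x + (a - 1) ≠ 0 := by positivity
      have hkey : Real.Gamma (x + a) = (x + (a - 1)) * Real.Gamma (x + (a - 1)) := by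
        rw [← Real.Gamma_add_one hne]; ring_nf
      have hrp : x ^ (a - 1) * x = x ^ a := by
        calc x ^ (a - 1) * x = x ^ (a - 1) * x ^ (1:ℝ) := by rw [Real.rpow_one]
          _ = x ^ (a - 1 + 1) := (Real.rpow_add hx0 _ _).symm
          _ = x ^ a := by norm_num
      have hxa1pos : (0:ℝ) < x ^ (a-1) := Real.rpow_pos_of_pos hx0 _
      have hGpos : (0:ℝ) < Real.Gamma (x + (a-1)) := Real.Gamma_pos_of_pos (by positivity)
      constructor
      · have h1 : x ≤ x + (a - 1) := by linarith
        calc c * (x ^ a * Real.Gamma x) = x * (c * (x ^ (a-1) * Real.Gamma x)) := by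
              rw [← hrp]; ring
          _ ≤ (x + (a-1)) * Real.Gamma (x + (a-1)) := by
              apply mul_le_mul h1 hlow (by positivity) (by linarith)
          _ = Real.Gamma (x + a) := hkey.symm
      · have h2 : x + (a - 1) ≤ (1 + a) * x := by nlinarith
        calc Real.Gamma (x + a) = (x + (a-1)) * Real.Gamma (x + (a-1)) := hkey
          _ ≤ ((1 + a) * x) * (C * (x ^ (a-1) * Real.Gamma x)) := by
              apply mul_le_mul h2 hup (by positivity) (by positivity)
          _ = C * (1 + a) * (x ^ a * Real.Gamma x) := by rw [← hrp]; ring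

lemma gamma_ratio_bound (a : ℝ) (ha : -1 ≤ a) :
    ∃ c C : ℝ, 0 < c ∧ 0 < C ∧ ∀ x : ℝ, 2 ≤ x →
      c * (x ^ a * Real.Gamma x) ≤ Real.Gamma (x + a) ∧
      Real.Gamma (x + a) ≤ C * (x ^ a * Real.Gamma x) := by
  rcases le_or_gt 0 a with h0 | h0
  · obtain ⟨n, hn⟩ := exists_nat_ge a
    have : a ≤ (n:ℝ) + 1 := by linarith
    exact gamma_ratio_nonneg n a h0 this
  · refine ⟨1, 4, one_pos, by norm_num, fun x hx => ?_⟩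
    set b := -a with hbdef
    have hb0 : 0 < b := by simp [hbdef]; linarith
    have hb1 : b ≤ 1 := by simp [hbdef]; linarith
    set y := x + a with hydef
    have hy1 : 1 ≤ y := by simp [hydef]; linarith
    have hy0 : 0 < y := by linarith
    have hx0 : (0:ℝ) < x := by linarith
    have hyb : y + b = x := by simp [hydef, hbdef]
    have h := wendel_aux y b (by linarith) hb0.le hb1
    rw [hyb] at h
    have hGy : 0 < Real.Gamma y := Real.Gamma_pos_of_pos hy0
    have hGx : 0 < Real.Gamma x := Real.Gamma_pos_of_pos hx0
    -- y^b bounds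
    have hyx : y ≤ x := by simp [hydef]; linarith
    have hxy2 : x / 2 ≤ y := by simp [hydef]; linarith
    have hyb_ub : y ^ b ≤ x ^ b := Real.rpow_le_rpow hy0.le hyx hb0.le
    have hyb_lb : x ^ b / 2 ≤ y ^ b := by
      have h1 : (x/2) ^ b ≤ y ^ b := Real.rpow_le_rpow (by positivity) hxy2 hb0.le
      have h2 : x ^ b / 2 ≤ (x/2) ^ b := by
        rw [Real.div_rpow hx0.le (by norm_num : (0:ℝ) ≤ 2)]
        have : (2:ℝ) ^ b ≤ 2 := by
          calc (2:ℝ) ^ b ≤ (2:ℝ) ^ (1:ℝ) := Real.rpow_le_rpow_of_exponent_le one_le_two hb1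
            _ = 2 := Real.rpow_one 2
        apply div_le_div_of_nonneg_left (by positivity) (by positivity) this
      linarith
    have hxa : x ^ a = (x ^ b)⁻¹ := by
      rw [← Real.rpow_neg hx0.le]
      norm_num [hbdef]
    have hxbpos : 0 < x ^ b := Real.rpow_pos_of_pos hx0 b
    have hybpos : 0 < y ^ b := Real.rpow_pos_of_pos hy0 b
    constructor
    · -- 1 * (x^a Γ x) ≤ Γ y
      rw [one_mul, hxa]
      rw [inv_mul_eq_div, div_le_iff₀ hxbpos]
      -- Γ x ≤ Γ y * x ^ b ; know Γ x ≤ y^b Γ y ≤ x^b Γ y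
      calc Real.Gamma x ≤ y ^ b * Real.Gamma y := h.2
        _ ≤ Real.Gamma y * x ^ b := by rw [mul_comm]; exact mul_le_mul_of_nonneg_left hyb_ub hGy.le
    · -- Γ y ≤ 4 x^a Γ x
      have key : x ^ b * Real.Gamma y ≤ 4 * Real.Gamma x := by
        nlinarith [h.1, mul_le_mul_of_nonneg_right hyb_lb hGy.le]
      have h4 : Real.Gamma y ≤ 4 * Real.Gamma x / x ^ b :=
        (le_div_iff₀ hxbpos).2 (by linarith [key, mul_comm (x ^ b) (Real.Gamma y)])
      calc Real.Gamma y ≤ 4 * Real.Gamma x / x ^ b := h4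
        _ = 4 * (x ^ a * Real.Gamma x) := by rw [hxa]; ring

lemma N_bound (α β : ℝ) (hβ : -1/2 ≤ β) (hαβ : β ≤ α) :
    ∃ c C : ℝ, 0 < c ∧ 0 < C ∧ ∀ ℓ : ℕ, 2 ≤ ℓ →
      c * ((ℓ:ℝ) + 1) ^ (2*α+1) ≤
        (2 * ℓ + α + β + 1) * Real.Gamma (β + 1) * Real.Gamma (ℓ + α + β + 1) *
          Real.Gamma (ℓ + α + 1) /
        (Real.Gamma (α + 1) * Real.Gamma (α + β + 2) * Real.Gamma (ℓ + 1) *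
          Real.Gamma (ℓ + β + 1)) ∧
      (2 * ℓ + α + β + 1) * Real.Gamma (β + 1) * Real.Gamma (ℓ + α + β + 1) *
          Real.Gamma (ℓ + α + 1) /
        (Real.Gamma (α + 1) * Real.Gamma (α + β + 2) * Real.Gamma (ℓ + 1) *
          Real.Gamma (ℓ + β + 1)) ≤ C * ((ℓ:ℝ) + 1) ^ (2*α+1) := by
  obtain ⟨c₁, C₁, hc₁, hC₁, h₁⟩ := gamma_ratio_bound (α + β) (by linarith)
  obtain ⟨c₂, C₂, hc₂, hC₂, h₂⟩ := gamma_ratio_bound (α - β) (by linarith)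
  have hGβ : 0 < Real.Gamma (β + 1) := Real.Gamma_pos_of_pos (by linarith)
  have hGα : 0 < Real.Gamma (α + 1) := Real.Gamma_pos_of_pos (by linarith)
  have hGαβ : 0 < Real.Gamma (α + β + 2) := Real.Gamma_pos_of_pos (by linarith)
  set K : ℝ := Real.Gamma (β + 1) / (Real.Gamma (α + 1) * Real.Gamma (α + β + 2)) with hK
  have hKpos : 0 < K := by positivity
  refine ⟨c₁ * c₂ * ((1/2:ℝ) ^ (α - β)) * K, C₁ * C₂ * ((β + 2) ^ (α - β)) * (α + β + 3) * K,
    by positivity, ?_, ?_⟩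
  · have : (0:ℝ) < β + 2 := by linarith
    have : (0:ℝ) < α + β + 3 := by linarith
    positivity
  intro ℓ hℓ
  have hℓ2 : (2:ℝ) ≤ (ℓ:ℝ) := by exact_mod_cast hℓ
  set u : ℝ := (ℓ:ℝ) + 1 with hu
  set v : ℝ := (ℓ:ℝ) + β + 1 with hv
  have hu2 : (2:ℝ) ≤ u := by simp [hu]; linarith
  have hv2 : (2:ℝ) ≤ v := by simp [hv]; linarith
  have hupos : (0:ℝ) < u := by linarith
  have hvpos : (0:ℝ) < v := by linarith
  have hGu : 0 < Real.Gamma u := Real.Gamma_pos_of_pos hupos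
  have hGv : 0 < Real.Gamma v := Real.Gamma_pos_of_pos hvpos
  have e1 : (ℓ:ℝ) + α + β + 1 = u + (α + β) := by simp [hu]; ring
  have e2 : (ℓ:ℝ) + α + 1 = v + (α - β) := by simp [hv]; ring
  rw [e1, e2]
  obtain ⟨h1l, h1u⟩ := h₁ u hu2
  obtain ⟨h2l, h2u⟩ := h₂ v hv2
  have hG1 : 0 < Real.Gamma (u + (α + β)) := Real.Gamma_pos_of_pos (by linarith)
  have hG2 : 0 < Real.Gamma (v + (α - β)) := Real.Gamma_pos_of_pos (by linarith)
  -- bounds on v ^ (α - β)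
  have hab : (0:ℝ) ≤ α - β := by linarith
  have hvu_lb : u / 2 ≤ v := by simp [hu, hv]; linarith
  have hvu_ub : v ≤ (β + 2) * u := by nlinarith [mul_nonneg (by linarith : (0:ℝ) ≤ β + 1) (by linarith : (0:ℝ) ≤ (ℓ:ℝ))]
  have hva_lb : (1/2:ℝ) ^ (α - β) * u ^ (α - β) ≤ v ^ (α - β) := by
    calc (1/2:ℝ) ^ (α - β) * u ^ (α - β) = ((1/2) * u) ^ (α - β) :=
          (Real.mul_rpow (by norm_num) hupos.le).symm
      _ ≤ v ^ (α - β) := Real.rpow_le_rpow (by positivity) (by linarith) hab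
  have hva_ub : v ^ (α - β) ≤ (β + 2) ^ (α - β) * u ^ (α - β) := by
    calc v ^ (α - β) ≤ ((β + 2) * u) ^ (α - β) :=
          Real.rpow_le_rpow hvpos.le hvu_ub hab
      _ = (β + 2) ^ (α - β) * u ^ (α - β) := Real.mul_rpow (by linarith) hupos.le
  -- bounds on the linear factor
  have hlin_lb : u ≤ 2 * (ℓ:ℝ) + α + β + 1 := by linarith
  have hlin_ub : 2 * (ℓ:ℝ) + α + β + 1 ≤ (α + β + 3) * u := by nlinarith [mul_nonneg (by linarith : (0:ℝ) ≤ α + β + 1) (by linarith : (0:ℝ) ≤ (ℓ:ℝ))]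
  have hlinpos : (0:ℝ) < 2 * (ℓ:ℝ) + α + β + 1 := by linarith
  -- key rpow identity
  have hrpid : u ^ (α + β) * u ^ (α - β) * u = u ^ (2*α+1) := by
    rw [← Real.rpow_add hupos]
    calc u ^ (α + β + (α - β)) * u = u ^ (α + β + (α - β)) * u ^ (1:ℝ) := by
          rw [Real.rpow_one]
      _ = u ^ (2*α+1) := by rw [← Real.rpow_add hupos]; ring_nf
  have hDen : (0:ℝ) < Real.Gamma (α + 1) * Real.Gamma (α + β + 2) * Real.Gamma u *
      Real.Gamma v := by positivity
  have f3 : c₂ * ((1/2:ℝ) ^ (α - β) * u ^ (α - β) * Real.Gamma v) ≤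
      Real.Gamma (v + (α - β)) := by
    refine le_trans ?_ h2l
    have : (1/2:ℝ) ^ (α - β) * u ^ (α - β) * Real.Gamma v ≤ v ^ (α - β) * Real.Gamma v :=
      mul_le_mul_of_nonneg_right hva_lb hGv.le
    exact mul_le_mul_of_nonneg_left this hc₂.le
  have f3' : Real.Gamma (v + (α - β)) ≤
      C₂ * ((β + 2) ^ (α - β) * u ^ (α - β) * Real.Gamma v) := by
    refine le_trans h2u ?_
    have : v ^ (α - β) * Real.Gamma v ≤ (β + 2) ^ (α - β) * u ^ (α - β) * Real.Gamma v :=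
      mul_le_mul_of_nonneg_right hva_ub hGv.le
    exact mul_le_mul_of_nonneg_left this hC₂.le
  constructor
  · rw [le_div_iff₀ hDen]
    calc c₁ * c₂ * (1/2:ℝ) ^ (α - β) * K * u ^ (2*α+1) *
          (Real.Gamma (α + 1) * Real.Gamma (α + β + 2) * Real.Gamma u * Real.Gamma v)
        = u * Real.Gamma (β + 1) * (c₁ * (u ^ (α + β) * Real.Gamma u)) *
          (c₂ * ((1/2:ℝ) ^ (α - β) * u ^ (α - β) * Real.Gamma v)) := by
          rw [← hrpid, hK]; field_simp
      _ ≤ (2 * (ℓ:ℝ) + α + β + 1) * Real.Gamma (β + 1) * Real.Gamma (u + (α + β)) *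
          Real.Gamma (v + (α - β)) := by
          have half : (0:ℝ) ≤ (1/2:ℝ) ^ (α - β) * u ^ (α - β) * Real.Gamma v := by positivity
          apply mul_le_mul _ f3 (by positivity) (by positivity)
          apply mul_le_mul _ h1l (by positivity) (by positivity)
          exact mul_le_mul_of_nonneg_right hlin_lb hGβ.le
  · rw [div_le_iff₀ hDen]
    calc (2 * (ℓ:ℝ) + α + β + 1) * Real.Gamma (β + 1) * Real.Gamma (u + (α + β)) *
          Real.Gamma (v + (α - β))
        ≤ ((α + β + 3) * u) * Real.Gamma (β + 1) * (C₁ * (u ^ (α + β) * Real.Gamma u)) *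
          (C₂ * ((β + 2) ^ (α - β) * u ^ (α - β) * Real.Gamma v)) := by
          have h3 : (0:ℝ) < α + β + 3 := by linarith
          apply mul_le_mul _ f3' hG2.le (by positivity)
          apply mul_le_mul _ h1u hG1.le (by positivity)
          exact mul_le_mul_of_nonneg_right hlin_ub hGβ.le
      _ = C₁ * C₂ * (β + 2) ^ (α - β) * (α + β + 3) * K * u ^ (2*α+1) *
          (Real.Gamma (α + 1) * Real.Gamma (α + β + 2) * Real.Gamma u * Real.Gamma v) := by
          rw [← hrpid, hK]; field_simp

lemma term_bound (α β p : ℝ) (hβ : -1/2 ≤ β) (hαβ : β ≤ α) (hp : 0 ≤ p) :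
    ∃ c C : ℝ, 0 < c ∧ 0 < C ∧ ∀ ℓ : ℕ, 2 ≤ ℓ →
      c * ((ℓ:ℝ) + 1) ^ (2*α+1-2*p) ≤
        ((2 * ℓ + α + β + 1) * Real.Gamma (β + 1) * Real.Gamma (ℓ + α + β + 1) *
          Real.Gamma (ℓ + α + 1) /
        (Real.Gamma (α + 1) * Real.Gamma (α + β + 2) * Real.Gamma (ℓ + 1) *
          Real.Gamma (ℓ + β + 1))) / (1 + (ℓ:ℝ) * ((ℓ:ℝ) + α + β + 1)) ^ p ∧
      ((2 * ℓ + α + β + 1) * Real.Gamma (β + 1) * Real.Gamma (ℓ + α + β + 1) *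
          Real.Gamma (ℓ + α + 1) /
        (Real.Gamma (α + 1) * Real.Gamma (α + β + 2) * Real.Gamma (ℓ + 1) *
          Real.Gamma (ℓ + β + 1))) / (1 + (ℓ:ℝ) * ((ℓ:ℝ) + α + β + 1)) ^ p ≤
      C * ((ℓ:ℝ) + 1) ^ (2*α+1-2*p) := by
  obtain ⟨cN, CN, hcN, hCN, hNb⟩ := N_bound α β hβ hαβ
  have hM3 : (0:ℝ) < α + β + 3 := by linarith
  refine ⟨cN / (α + β + 3) ^ p, CN / ((1/2:ℝ)) ^ p, by positivity, by positivity, fun ℓ hℓ => ?_⟩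
  obtain ⟨hNl, hNu⟩ := hNb ℓ hℓ
  have hℓ2 : (2:ℝ) ≤ (ℓ:ℝ) := by exact_mod_cast hℓ
  set u : ℝ := (ℓ:ℝ) + 1 with hu
  have hupos : (0:ℝ) < u := by simp [hu]; linarith
  set D : ℝ := 1 + (ℓ:ℝ) * ((ℓ:ℝ) + α + β + 1) with hD
  have hM0 : (0:ℝ) ≤ α + β + 1 := by linarith
  have hD_lb : u ^ (2:ℕ) / 2 ≤ D := by
    simp only [hD, hu]
    nlinarith [sq_nonneg ((ℓ:ℝ) - 1), mul_nonneg hM0 (by linarith : (0:ℝ) ≤ (ℓ:ℝ))]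
  have hD_ub : D ≤ (α + β + 3) * u ^ (2:ℕ) := by
    simp only [hD, hu]
    nlinarith [mul_nonneg hM0 (by nlinarith : (0:ℝ) ≤ (ℓ:ℝ)^2 + (ℓ:ℝ) + 1),
      sq_nonneg ((ℓ:ℝ) + 1)]
  have hDpos : (0:ℝ) < D := by nlinarith
  have hu2p : ((u ^ (2:ℕ)) : ℝ) ^ p = u ^ (2*p) := by
    rw [← Real.rpow_natCast u 2, ← Real.rpow_mul hupos.le]
    norm_num
  have hDp_lb : (1/2:ℝ) ^ p * u ^ (2*p) ≤ D ^ p := by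
    calc (1/2:ℝ) ^ p * u ^ (2*p) = ((1/2) * u ^ (2:ℕ)) ^ p := by
          rw [Real.mul_rpow (by norm_num) (by positivity), hu2p]
      _ ≤ D ^ p := Real.rpow_le_rpow (by positivity) (by linarith) hp
  have hDp_ub : D ^ p ≤ (α + β + 3) ^ p * u ^ (2*p) := by
    calc D ^ p ≤ ((α + β + 3) * u ^ (2:ℕ)) ^ p :=
          Real.rpow_le_rpow hDpos.le hD_ub hp
      _ = (α + β + 3) ^ p * u ^ (2*p) := by
          rw [Real.mul_rpow hM3.le (by positivity), hu2p]
  have hDppos : (0:ℝ) < D ^ p := Real.rpow_pos_of_pos hDpos p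
  have hurq : u ^ (2*α+1) / u ^ (2*p) = u ^ (2*α+1-2*p) := by
    rw [← Real.rpow_sub hupos]
  have hNpos : (0:ℝ) ≤ (2 * ℓ + α + β + 1) * Real.Gamma (β + 1) *
      Real.Gamma (ℓ + α + β + 1) * Real.Gamma (ℓ + α + 1) /
      (Real.Gamma (α + 1) * Real.Gamma (α + β + 2) * Real.Gamma (ℓ + 1) *
        Real.Gamma (ℓ + β + 1)) := le_trans (by positivity) hNl
  constructor
  · calc cN / (α + β + 3) ^ p * u ^ (2*α+1-2*p)
        = cN * u ^ (2*α+1) / ((α + β + 3) ^ p * u ^ (2*p)) := by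
          rw [mul_div_mul_comm, hurq]
      _ ≤ _ := by
          apply div_le_div₀ hNpos hNl hDppos hDp_ub
  · calc ((2 * ℓ + α + β + 1) * Real.Gamma (β + 1) * Real.Gamma (ℓ + α + β + 1) *
          Real.Gamma (ℓ + α + 1) /
        (Real.Gamma (α + 1) * Real.Gamma (α + β + 2) * Real.Gamma (ℓ + 1) *
          Real.Gamma (ℓ + β + 1))) / D ^ p
        ≤ CN * u ^ (2*α+1) / ((1/2:ℝ) ^ p * u ^ (2*p)) := by
          apply div_le_div₀ (by positivity) hNu (by positivity) hDp_lb
      _ = CN / ((1/2:ℝ)) ^ p * u ^ (2*α+1-2*p) := by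
          rw [mul_div_mul_comm, hurq]

lemma rpow_two_sided (q y x : ℝ) (hy : 0 < y) (h1 : y ≤ x) (h2 : x ≤ 2*y) :
    min 1 (2^q) * y^q ≤ x^q ∧ x^q ≤ max 1 (2^q) * y^q := by
  have hyq : (0:ℝ) < y ^ q := Real.rpow_pos_of_pos hy q
  have h2yq : ((2:ℝ)*y) ^ q = 2^q * y^q := Real.mul_rpow (by norm_num) hy.le
  rcases le_or_gt 0 q with hq | hq
  · constructor
    · calc min 1 (2^q) * y^q ≤ 1 * y^q :=
            mul_le_mul_of_nonneg_right (min_le_left _ _) hyq.le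
        _ = y^q := one_mul _
        _ ≤ x^q := Real.rpow_le_rpow hy.le h1 hq
    · calc x^q ≤ (2*y)^q := Real.rpow_le_rpow (by linarith) h2 hq
        _ = 2^q * y^q := h2yq
        _ ≤ max 1 (2^q) * y^q :=
            mul_le_mul_of_nonneg_right (le_max_right _ _) hyq.le
  · constructor
    · calc min 1 (2^q) * y^q ≤ 2^q * y^q :=
            mul_le_mul_of_nonneg_right (min_le_right _ _) hyq.le
        _ = (2*y)^q := h2yq.symm
        _ ≤ x^q := Real.rpow_le_rpow_of_nonpos (by linarith) h2 hq.le
    · calc x^q ≤ y^q := Real.rpow_le_rpow_of_nonpos hy h1 hq.le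
        _ = 1 * y^q := (one_mul _).symm
        _ ≤ max 1 (2^q) * y^q :=
            mul_le_mul_of_nonneg_right (le_max_left _ _) hyq.le

/-- For `α ≥ β ≥ -1/2` and `p ≥ 0`, the series over even indices
`∑_{ℓ even} N ℓ / (1 + ℓ(ℓ+α+β+1))^p` converges if and only if `p > α + 1`
(the RKHS criterion for the real projective space, whose spectrum is indexed by
the even natural numbers). -/
theorem sobolev_RKHS_criterion_real_projective
    (α β : ℝ) (hβ : -1/2 ≤ β) (hαβ : β ≤ α)
    (N : ℕ → ℝ)
    (hN : ∀ ℓ : ℕ, N ℓ =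
      (2 * ℓ + α + β + 1) * Real.Gamma (β + 1) * Real.Gamma (ℓ + α + β + 1) *
        Real.Gamma (ℓ + α + 1) /
      (Real.Gamma (α + 1) * Real.Gamma (α + β + 2) * Real.Gamma (ℓ + 1) *
        Real.Gamma (ℓ + β + 1)))
    (p : ℝ) (hp : 0 ≤ p) :
    Summable (fun ℓ : {n : ℕ // Even n} =>
      N ℓ / (1 + (ℓ : ℕ) * ((ℓ : ℕ) + α + β + 1)) ^ p) ↔ α + 1 < p := by

  set q : ℝ := 2*α+1-2*p with hq
  set G : ℕ → ℝ := fun n => N n / (1 + (n:ℝ) * ((n:ℝ) + α + β + 1)) ^ p with hG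
  obtain ⟨c, C, hc, hC, hbd⟩ := term_bound α β p hβ hαβ hp
  have hbd' : ∀ ℓ : ℕ, 2 ≤ ℓ → c * ((ℓ:ℝ) + 1) ^ q ≤ G ℓ ∧ G ℓ ≤ C * ((ℓ:ℝ) + 1) ^ q := by
    intro ℓ hℓ
    have := hbd ℓ hℓ
    rw [hG]; simp only [hN ℓ]
    exact this
  -- the equivalence with ℕ
  have heq : ∀ k : ℕ, 2 * (k / 2) = k ↔ Even k := by
    intro k; constructor
    · intro h; exact ⟨k/2, by omega⟩
    · rintro ⟨r, rfl⟩; omega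
  let e : ℕ ≃ {n : ℕ // Even n} :=
    { toFun := fun k => ⟨2*k, even_two_mul k⟩
      invFun := fun n => n.1 / 2
      left_inv := fun k => by simp
      right_inv := fun n => by
        obtain ⟨m, hm⟩ := n.2
        exact Subtype.ext (by simp [hm]; omega) }
  have hstep1 : Summable (fun ℓ : {n : ℕ // Even n} =>
      N ℓ / (1 + (ℓ : ℕ) * ((ℓ : ℕ) + α + β + 1)) ^ p) ↔
      Summable (fun k : ℕ => G (2*k)) := by
    rw [← e.summable_iff]
    rfl
  rw [hstep1]
  -- two-sided bounds for G (2 * (k+1)) against ((k:ℝ)+2)^q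
  have hmin : (0:ℝ) < min 1 (2^q) := lt_min one_pos (Real.rpow_pos_of_pos two_pos q)
  have hkey : ∀ k : ℕ,
      (c * min 1 (2^q)) * ((k:ℝ)+2) ^ q ≤ G (2*(k+1)) ∧
      G (2*(k+1)) ≤ (C * max 1 (2^q)) * ((k:ℝ)+2) ^ q := by
    intro k
    have h2k : 2 ≤ 2*(k+1) := by omega
    obtain ⟨hl, hu⟩ := hbd' (2*(k+1)) h2k
    have hcast : ((2*(k+1) : ℕ) : ℝ) + 1 = 2*(k:ℝ) + 3 := by push_cast; ring
    rw [hcast] at hl hu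
    have hts := rpow_two_sided q ((k:ℝ)+2) (2*(k:ℝ)+3) (by positivity) (by linarith)
      (by linarith)
    constructor
    · calc (c * min 1 (2^q)) * ((k:ℝ)+2) ^ q = c * (min 1 (2^q) * ((k:ℝ)+2) ^ q) := by ring
        _ ≤ c * (2*(k:ℝ)+3) ^ q := mul_le_mul_of_nonneg_left hts.1 hc.le
        _ ≤ G (2*(k+1)) := hl
    · calc G (2*(k+1)) ≤ C * (2*(k:ℝ)+3) ^ q := hu
        _ ≤ C * (max 1 (2^q) * ((k:ℝ)+2) ^ q) := mul_le_mul_of_nonneg_left hts.2 hC.le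
        _ = (C * max 1 (2^q)) * ((k:ℝ)+2) ^ q := by ring
  have hsum2 : Summable (fun n : ℕ => ((n:ℝ)+2) ^ q) ↔ q < -1 := by
    have h := summable_nat_add_iff (f := fun n : ℕ => ((n:ℕ):ℝ) ^ q) 2
    rw [Real.summable_nat_rpow] at h
    have e2 : (fun n : ℕ => ((n:ℝ)+2) ^ q) = (fun n : ℕ => (((n+2:ℕ)):ℝ) ^ q) := by
      funext n; push_cast; ring_nf
    rw [e2]
    exact h
  have hGnonneg : ∀ k : ℕ, 0 ≤ G (2*(k+1)) := fun k =>
    le_trans (by positivity) (hkey k).1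
  constructor
  · intro hsum
    have h1 : Summable (fun k : ℕ => G (2*(k+1))) := by
      have := (summable_nat_add_iff 1).2 hsum
      exact this
    have h2 : Summable (fun n : ℕ => ((n:ℝ)+2) ^ q) := by
      apply Summable.of_nonneg_of_le (fun n => by positivity)
        (fun n => ?_) (h1.div_const (c * min 1 (2^q)))
      rw [le_div_iff₀ (by positivity)]
      calc ((n:ℝ)+2) ^ q * (c * min 1 (2^q)) = (c * min 1 (2^q)) * ((n:ℝ)+2) ^ q := by ring
        _ ≤ G (2*(n+1)) := (hkey n).1
    have := hsum2.1 h2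
    simp only [hq] at this
    linarith
  · intro hple
    have hqlt : q < -1 := by simp only [hq]; linarith
    have h2 : Summable (fun n : ℕ => ((n:ℝ)+2) ^ q) := hsum2.2 hqlt
    have h1 : Summable (fun k : ℕ => G (2*(k+1))) := by
      apply Summable.of_nonneg_of_le hGnonneg (fun n => (hkey n).2)
        (h2.mul_left (C * max 1 (2^q)))
    exact (summable_nat_add_iff 1).1 h1
end
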